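/- arXiv:2604.02989 — 2 statements merged into one kernel-verified Lean document; each statement's English description precedes it below -/
import Mathlib

section
/- For n ≥ 1, in the polynomial ring ℂ[δ], det Γ_n = δ^{B(n)} · ∏_{k=1}^{n−1} (δ − k)^{Σ_{l=k+1}^{n} S(n,l)}. -/
/-! Let `ζ` be the zeta matrix of the lattice of set partitions and `(δ)_b = δ(δ-1)⋯(δ-b+1)`.
Sorting the maps from the blocks of `t` to an `m`-element set by their kernel gives
`m^{b(t)} = ∑_{r ≥ t} (m)_{b(r)}`, hence `δ^{b(p ∨ q)} = ∑_{r ≥ p ∨ q} (δ)_{b(r)}`, which says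
`Γ_n = ζ · diag((δ)_{b(r)}) · ζᵀ`. As `ζ` is unitriangular along a linear extension of the order,
`det Γ_n = ∏_r (δ)_{b(r)}`, in which `δ - k` occurs once for each partition with more than `k`
blocks. -/

/- Set partitions of a finite set are modelled as equivalence relations (`Setoid`);
   `nBlocks` is the number of blocks (equivalence classes), `p ⊔ q` is the join.
   `S n l` is the Stirling number of the second kind, `B n` the Bell number, and
   `Gram n` is the Gram matrix of the spine standard module of the partition algebra,
   over `ℂ[δ]` (with `δ = Polynomial.X`). -/

open scoped Classical

noncomputable section

def nBlocks {X : Type*} (s : Setoid X) : ℕ := Nat.card (Quotient s)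

def S (n l : ℕ) : ℕ := Nat.card {s : Setoid (Fin n) // nBlocks s = l}

def B (n : ℕ) : ℕ := ∑ l ∈ Finset.Icc 1 n, S n l

instance {X : Type*} [Finite X] : Finite (Setoid X) :=
  Finite.of_injective (fun s : Setoid X => (s.r : X → X → Prop)) fun s t h => by
    cases s; cases t; cases h; rfl

noncomputable instance (n : ℕ) : Fintype (Setoid (Fin n)) :=
  Fintype.ofFinite _

def Gram (n : ℕ) : Matrix (Setoid (Fin n)) (Setoid (Fin n)) (Polynomial ℂ) :=
  Matrix.of fun p q => (Polynomial.X : Polynomial ℂ) ^ nBlocks (p ⊔ q)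

open Finset Polynomial Matrix

namespace Setoid

variable {α β : Type*}

def kerEqEquivEmbedding (r : Setoid α) : {f : α → β // ker f = r} ≃ (Quotient r ↪ β) where
  toFun f := ⟨Quotient.lift f.1 f.2.ge, (lift_injective_iff_ker_eq_of_le _).2 f.2⟩
  invFun g := ⟨g ∘ Quotient.mk r, Setoid.ext fun a b => g.injective.eq_iff.trans Quotient.eq⟩
  left_inv _ := rfl
  right_inv g := by
    ext x
    induction x using Quotient.ind
    rfl

end Setoid

section Counting

variable {α : Type*} [Fintype α] [Fintype (Setoid α)]

lemma card_pow_nBlocks_eq_sum_descFactorial (β : Type*) [Fintype β] (t : Setoid α) :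
    Fintype.card β ^ nBlocks t =
      ∑ r ∈ univ.filter (t ≤ ·), (Fintype.card β).descFactorial (nBlocks r) := by
  have hfib : ∀ r, #(univ.filter fun f : α → β => Setoid.ker f = r) =
      (Fintype.card β).descFactorial (nBlocks r) := fun r => by
    rw [← Fintype.card_subtype, Fintype.card_congr (Setoid.kerEqEquivEmbedding r),
      Fintype.card_embedding_eq, nBlocks, Nat.card_eq_fintype_card]
  calc Fintype.card β ^ nBlocks t
      = #(univ.filter fun f : α → β => t ≤ Setoid.ker f) := by
        rw [← Fintype.card_subtype, Fintype.card_congr (Setoid.liftEquiv (β := β) t),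
          Fintype.card_fun, nBlocks, Nat.card_eq_fintype_card]
    _ = ∑ r ∈ univ.filter (t ≤ ·), #(univ.filter fun f : α → β => Setoid.ker f = r) := by
        rw [card_eq_sum_card_fiberwise (f := Setoid.ker) (t := univ.filter (t ≤ ·))
          fun f hf => by simpa using hf]
        refine sum_congr rfl fun r hr => congrArg card ?_
        rw [filter_filter]
        exact filter_congr fun f _ => and_iff_right_of_imp fun h => h ▸ (mem_filter.1 hr).2
    _ = _ := sum_congr rfl fun r _ => hfib r

lemma X_pow_nBlocks_eq_sum_descPochhammer (R : Type*) [CommRing R] [IsDomain R] [CharZero R]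
    (t : Setoid α) :
    (X : R[X]) ^ nBlocks t = ∑ r ∈ univ.filter (t ≤ ·), descPochhammer R (nBlocks r) := by
  refine eq_of_infinite_eval_eq _ _ ((Set.infinite_range_of_injective Nat.cast_injective).mono ?_)
  rintro _ ⟨m, rfl⟩
  have h := congrArg (Nat.cast : ℕ → R) (card_pow_nBlocks_eq_sum_descFactorial (Fin m) t)
  simp only [Fintype.card_fin, Nat.cast_pow, Nat.cast_sum] at h
  simp [eval_finsetSum, descPochhammer_eval_eq_descFactorial, h]

end Counting

section Zeta

def zetaMatrix (α R : Type*) [PartialOrder α] [Zero R] [One R] : Matrix α α R :=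
  of fun p r => if p ≤ r then 1 else 0

lemma det_zetaMatrix {α R : Type*} [PartialOrder α] [Fintype α] [CommRing R] :
    (zetaMatrix α R).det = 1 := by
  let e : LinearExtension α ≃ α := Equiv.refl α
  let : Fintype (LinearExtension α) := Fintype.ofEquiv α e.symm
  have hupper : ((zetaMatrix α R).submatrix e e).IsUpperTriangular := fun i j hij =>
    if_neg fun hle : e i ≤ e j => (toLinearExtension.monotone hle).not_gt hij
  rw [← det_submatrix_equiv_self e, det_of_isUpperTriangular hupper]
  exact prod_eq_one fun i _ => if_pos le_rfl

lemma zetaMatrix_mul_diagonal_mul_transpose_apply {α R : Type*} [SemilatticeSup α] [Fintype α]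
    [NonAssocSemiring R] (d : α → R) (p q : α) :
    (zetaMatrix α R * diagonal d * (zetaMatrix α R)ᵀ) p q =
      ∑ r ∈ univ.filter (p ⊔ q ≤ ·), d r := by
  rw [mul_apply, sum_filter]
  refine sum_congr rfl fun r _ => ?_
  simp only [mul_diagonal, transpose_apply, zetaMatrix, of_apply, sup_le_iff]
  split_ifs <;> simp_all

end Zeta

lemma gram_eq_zetaMatrix_mul_diagonal_mul_transpose (n : ℕ) :
    Gram n = zetaMatrix _ ℂ[X] * diagonal (fun r => descPochhammer ℂ (nBlocks r)) *
      (zetaMatrix _ ℂ[X])ᵀ := by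
  ext p q
  rw [zetaMatrix_mul_diagonal_mul_transpose_apply, ← X_pow_nBlocks_eq_sum_descPochhammer]
  rfl

lemma descPochhammer_eq_prod_range (R : Type*) [CommRing R] (k : ℕ) :
    descPochhammer R k = ∏ j ∈ range k, (X - (j : R[X])) := by
  induction k with
  | zero => simp
  | succ k ih => rw [descPochhammer_succ_right, ih, prod_range_succ]

lemma prod_descPochhammer_eq_prod_pow (R : Type*) [CommRing R] {ι : Type*} (s : Finset ι)
    (f : ι → ℕ) {N : ℕ} (hf : ∀ i ∈ s, f i ≤ N) :
    ∏ i ∈ s, descPochhammer R (f i) =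
      ∏ j ∈ range N, (X - (j : R[X])) ^ #(s.filter (j < f ·)) := by
  have hrange : ∀ i ∈ s, range (f i) = (range N).filter (· < f i) := fun i hi => by
    ext j
    simp only [mem_range, mem_filter]
    have := hf i hi
    omega
  simp_rw [← prod_const, prod_filter]
  rw [prod_comm]
  refine prod_congr rfl fun i hi => ?_
  rw [descPochhammer_eq_prod_range, hrange i hi, prod_filter]

lemma nBlocks_le_card {α : Type*} [Finite α] (s : Setoid α) : nBlocks s ≤ Nat.card α :=
  Nat.card_le_card_of_surjective _ Quotient.mk_surjective

lemma card_filter_lt_nBlocks (n k : ℕ) :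
    #(univ.filter fun r : Setoid (Fin n) => k < nBlocks r) = ∑ l ∈ Icc (k + 1) n, S n l := by
  have hle : ∀ r : Setoid (Fin n), nBlocks r ≤ n := fun r => by
    simpa using nBlocks_le_card r
  rw [card_eq_sum_card_fiberwise (f := nBlocks) (s := univ.filter fun r => k < nBlocks r)
    (t := Icc (k + 1) n) fun r hr => mem_Icc.2 ⟨(mem_filter.1 hr).2, hle r⟩]
  refine sum_congr rfl fun l hl => ?_
  rw [S, Nat.card_eq_fintype_card, Fintype.card_subtype, filter_filter]
  exact congrArg card (filter_congr fun r _ => by simp only [mem_Icc] at hl; omega)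

theorem gram_det_factorisation (n : ℕ) (hn : 1 ≤ n) :
    (Gram n).det =
      Polynomial.X ^ B n *
        ∏ k ∈ Finset.Icc 1 (n - 1),
          (Polynomial.X - Polynomial.C (k : ℂ)) ^ (∑ l ∈ Finset.Icc (k + 1) n, S n l) := by
  have hrange : range n = insert 0 (Icc 1 (n - 1)) := by
    ext j
    simp only [mem_range, mem_insert, mem_Icc]
    omega
  rw [gram_eq_zetaMatrix_mul_diagonal_mul_transpose, det_mul, det_mul, det_zetaMatrix,
    det_transpose, det_zetaMatrix, one_mul, mul_one, det_diagonal,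
    prod_descPochhammer_eq_prod_pow ℂ univ _ fun r _ => by simpa using nBlocks_le_card r,
    hrange, prod_insert (by simp)]
  simp only [card_filter_lt_nBlocks, B, Nat.cast_zero, sub_zero, zero_add, ← C_eq_natCast]
end
end

section
/- Fix integers m ≥ 1 and Q ≥ 1. The ℂ-linear span of the Potts vectors v_p, where p ranges over all EVEN set partitions of {1,…,2m}, has dimension Σ_{t=1}^{Q} T(m,t), i.e. the number of even set partitions of {1,…,2m} with at most Q blocks (here T(m,t) = 0 for t > m). -/
/- Set partitions are modelled as equivalence relations (`Setoid`); `nBlocks` is the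
   number of blocks (equivalence classes); a partition is even if every block has even
   cardinality and `T m t` counts even set partitions of a `2*m`-element set into
   exactly `t` blocks.  The Potts vector `potts n Q p` sends a word `w : Fin n → Fin Q`
   to `1` if `w` is constant on every block of `p`, and to `0` otherwise. -/

open scoped Classical

noncomputable section

def IsEvenPartition {X : Type*} (s : Setoid X) : Prop :=
  ∀ x : X, Even (Nat.card {y : X // s.r x y})

def T (m t : ℕ) : ℕ :=
  Nat.card {s : Setoid (Fin (2 * m)) // IsEvenPartition s ∧ nBlocks s = t}

def potts (n Q : ℕ) (p : Setoid (Fin n)) : (Fin n → Fin Q) → ℂ :=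
  fun w => if ∀ x y : Fin n, p.r x y → w x = w y then 1 else 0

/-! The Potts vector `v_p` is the sum of the indicators `e_q` (`kerIndicator q`) of the words whose kernel is
exactly `q`, over all partitions `q` coarser than `p`. Coarsening keeps a partition even, so by
downward induction on `q` (Möbius inversion) the `v_p` with `p` even span the same space as the
`e_q` with `q` even. Finally `e_q = 0` exactly when `q` has more than `Q` blocks, and the nonzero
`e_q` have disjoint nonempty supports, so they form a basis of that space; grouping them by their
number of blocks gives `∑ T(m, t)`. -/

instance inst_s14 {X : Type*} [Finite X] : Finite (Setoid X) :=
  Finite.of_injective (fun s : Setoid X => s.r) fun _ _ h =>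
    Setoid.ext fun x y => iff_of_eq (congrFun₂ h x y)

noncomputable instance {X : Type*} [Finite X] : Fintype (Setoid X) := Fintype.ofFinite _

section Partitions

variable {X : Type*}

lemma nBlocks_pos [Finite X] [Nonempty X] (s : Setoid X) : 0 < nBlocks s :=
  have : Nonempty (Quotient s) := .map (Quotient.mk s) ‹_›
  Nat.card_pos

lemma nBlocks_ker_le {Y : Type*} [Finite Y] (w : X → Y) : nBlocks (Setoid.ker w) ≤ Nat.card Y :=
  (Nat.card_congr (Setoid.quotientKerEquivRange w)).trans_le (Finite.card_subtype_le _)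

lemma exists_ker_eq [Finite X] {Y : Type*} [Finite Y] (q : Setoid X)
    (h : nBlocks q ≤ Nat.card Y) : ∃ w : X → Y, Setoid.ker w = q := by
  have := Fintype.ofFinite (Quotient q)
  have := Fintype.ofFinite Y
  obtain ⟨f⟩ := Function.Embedding.nonempty_of_card_le (α := Quotient q) (β := Y)
    (by simpa [nBlocks, Nat.card_eq_fintype_card] using h)
  refine ⟨f ∘ Quotient.mk q, Setoid.ext fun x y => ?_⟩
  rw [Setoid.ker_def, Function.comp_apply, Function.comp_apply, f.injective.eq_iff, Quotient.eq]

lemma IsEvenPartition.even_natCard [Finite X] {s : Setoid X}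
    (h : IsEvenPartition s) : Even (Nat.card X) := by
  have := Fintype.ofFinite X
  rw [← Nat.card_congr (Equiv.sigmaFiberEquiv (Quotient.mk s)), Nat.card_sigma]
  refine Finset.even_sum _ fun c _ => c.inductionOn fun x => ?_
  rw [Nat.card_congr (Equiv.subtypeEquivRight fun y => Quotient.eq.trans (Setoid.comm' s))]
  exact h x

lemma IsEvenPartition.mono [Finite X] {s t : Setoid X} (hst : s ≤ t) (hs : IsEvenPartition s) :
    IsEvenPartition t := fun x => by
  let C := {y // t x y}
  have hclass (y : C) : Nat.card {z : C // s y z} = Nat.card {z // s y z} :=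
    Nat.card_congr (Equiv.subtypeSubtypeEquivSubtype fun h => t.trans y.2 (hst h))
  exact IsEvenPartition.even_natCard (s := s.comap Subtype.val) fun y => hclass y ▸ hs y

lemma natCard_nBlocks_le_eq_sum [Finite X] [Nonempty X] (P : Setoid X → Prop) (Q : ℕ) :
    Nat.card {q // P q ∧ nBlocks q ≤ Q}
      = ∑ t ∈ Finset.Icc 1 Q, Nat.card {q // P q ∧ nBlocks q = t} := by
  simp only [Nat.card_eq_fintype_card, Fintype.card_subtype]
  rw [Finset.card_eq_sum_card_fiberwise (f := nBlocks) (t := Finset.Icc 1 Q) fun q hq =>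
    Finset.mem_Icc.mpr ⟨nBlocks_pos q, (Finset.mem_filter.mp hq).2.2⟩]
  refine Finset.sum_congr rfl fun t ht => congrArg Finset.card ?_
  rw [Finset.filter_filter]
  exact Finset.filter_congr fun q _ => by grind

end Partitions

section KerIndicator

variable {X Y : Type*}

def kerIndicator (q : Setoid X) : (X → Y) → ℂ := fun w => if Setoid.ker w = q then 1 else 0

lemma kerIndicator_eq_zero [Finite Y] (q : Setoid X) (h : Nat.card Y < nBlocks q) :
    kerIndicator (Y := Y) q = 0 := by
  funext w
  have : Setoid.ker w ≠ q := fun hw => (nBlocks_ker_le w).not_gt (hw ▸ h)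
  simp [kerIndicator, this]

lemma linearIndepOn_kerIndicator [Finite X] [Finite Y] :
    LinearIndepOn ℂ (kerIndicator (Y := Y)) {q : Setoid X | nBlocks q ≤ Nat.card Y} := by
  -- evaluating at one word of each kernel turns the family into the standard basis
  choose w hw using fun q : {q : Setoid X | nBlocks q ≤ Nat.card Y} => exists_ker_eq q.1 q.2
  let evalAt : ((X → Y) → ℂ) →ₗ[ℂ] _ := LinearMap.pi fun q => LinearMap.proj (w q)
  apply LinearIndependent.of_comp evalAt
  have : evalAt ∘ (fun q => kerIndicator q.1) = fun q => Pi.single q (1 : ℂ) := by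
    ext q q'
    simp [evalAt, kerIndicator, hw, Pi.single_apply, Subtype.ext_iff, eq_comm]
  rw [this]
  exact Pi.linearIndependent_single_one _ ℂ

end KerIndicator

section Potts

open Submodule Set

variable {n Q : ℕ}

lemma potts_apply (p : Setoid (Fin n)) (w : Fin n → Fin Q) :
    potts n Q p w = if p ≤ Setoid.ker w then 1 else 0 :=
  if_congr Iff.rfl rfl rfl

lemma potts_eq_sum_kerIndicator (p : Setoid (Fin n)) :
    potts n Q p = ∑ q with p ≤ q, kerIndicator q := by
  funext w
  simp [Finset.sum_apply, kerIndicator, potts_apply]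

variable {P : Setoid (Fin n) → Prop}

lemma potts_mem_span_kerIndicator (hP : IsUpperSet {p | P p}) {p : Setoid (Fin n)} (hp : P p) :
    potts n Q p ∈ span ℂ (range fun q : {q // P q ∧ nBlocks q ≤ Q} => kerIndicator q.1) := by
  rw [potts_eq_sum_kerIndicator]
  refine sum_mem fun q hq => ?_
  have hPq : P q := hP (Finset.mem_filter.mp hq).2 hp
  by_cases hqQ : nBlocks q ≤ Q
  · exact subset_span ⟨⟨q, hPq, hqQ⟩, rfl⟩
  · rw [kerIndicator_eq_zero q (by simpa using hqQ)]
    exact zero_mem _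

lemma kerIndicator_mem_span_potts (hP : IsUpperSet {p | P p}) {q : Setoid (Fin n)} (hq : P q) :
    kerIndicator q ∈ span ℂ (range fun p : {p // P p} => potts n Q p.1) := by
  induction q using WellFoundedGT.induction with
  | _ q ih =>
  have hdecomp : kerIndicator q = potts n Q q - ∑ r with q < r, kerIndicator r := by
    rw [potts_eq_sum_kerIndicator, eq_sub_iff_add_eq, ← Finset.sum_insert (by simp)]
    congr 1
    ext r
    simp [le_iff_eq_or_lt, eq_comm]
  rw [hdecomp]
  refine sub_mem (subset_span ⟨⟨q, hq⟩, rfl⟩) (sum_mem fun r hr => ?_)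
  have hqr : q < r := (Finset.mem_filter.mp hr).2
  exact ih r hqr (hP hqr.le hq)

lemma span_potts_eq_span_kerIndicator (hP : IsUpperSet {p | P p}) :
    span ℂ (range fun p : {p // P p} => potts n Q p.1)
      = span ℂ (range fun q : {q // P q ∧ nBlocks q ≤ Q} => kerIndicator q.1) := by
  refine le_antisymm (span_le.mpr ?_) (span_le.mpr ?_)
  · rintro _ ⟨p, rfl⟩
    exact potts_mem_span_kerIndicator hP p.2
  · rintro _ ⟨q, rfl⟩
    exact kerIndicator_mem_span_potts hP q.2.1

end Potts

theorem even_potts_span_finrank_general (m Q : ℕ) (hm : 1 ≤ m) :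
    Module.finrank ℂ (Submodule.span ℂ
        (Set.range fun p : {s : Setoid (Fin (2 * m)) // IsEvenPartition s} =>
          potts (2 * m) Q p.1))
      = ∑ t ∈ Finset.Icc 1 Q, T m t := by
  have : Nonempty (Fin (2 * m)) := ⟨⟨0, by omega⟩⟩
  have hindep : LinearIndependent ℂ
      fun q : {q : Setoid (Fin (2 * m)) // IsEvenPartition q ∧ nBlocks q ≤ Q} =>
        kerIndicator (Y := Fin Q) q.1 :=
    linearIndepOn_kerIndicator.mono fun q hq => by simpa using hq.2
  rw [span_potts_eq_span_kerIndicator (P := IsEvenPartition) fun _ _ => IsEvenPartition.mono,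
    finrank_span_eq_card hindep, ← Nat.card_eq_fintype_card, natCard_nBlocks_le_eq_sum]
  rfl

theorem even_potts_span_finrank (m Q : ℕ) (hm : 1 ≤ m) (hQ : 1 ≤ Q) :
    Module.finrank ℂ (Submodule.span ℂ
        (Set.range fun p : {s : Setoid (Fin (2 * m)) // IsEvenPartition s} =>
          potts (2 * m) Q p.1))
      = ∑ t ∈ Finset.Icc 1 Q, T m t :=
  even_potts_span_finrank_general m Q hm

end
end
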